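/- arXiv:2112.13151 — 5 statements merged into one kernel-verified Lean document; each statement's English description precedes it below -/
import Mathlib

section
/- Let f ∈ F_q[x] be a monic divisor of x^n - 1 of degree k. For an additive character χ of F_{q^n}, the set {ψ : ψ is an additive character of F_{q^n} and χ = f ∘ ψ} has exactly q^k elements if the F_q-order of χ divides (x^n - 1)/f, and is empty otherwise. -/
/-!
Let `φ` be the `q`-Frobenius of `L`, a `K`-linear map with minimal polynomial `X ^ n - 1`, so
that `f ∘ β = f(φ) β`. Since `f ∘ β` is a polynomial in `β` of degree `q ^ deg f`, the kernel of
`f(φ)` has dimension at most `deg f`; for `f * g = X ^ n - 1` and `f(φ) g(φ) = 0` this forces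
`ker f(φ) = range g(φ)`, of dimension exactly `k`.

The polynomials `u` with `u ∘ χ` trivial form an ideal, generated by the order `h`, so `h ∣ g`
iff `χ` is trivial on `range g(φ) = ker f(φ)`. By duality of finite abelian groups this is
exactly when `χ` lies in the image of `ψ ↦ ψ ∘ f(φ)`, and the fibres of this map are cosets of
the characters trivial on `range f(φ)`, of size `|L / range f(φ)| = |ker f(φ)| = q ^ k`.
-/

/-- The `𝔽_q[x]`-module action on `L`: `f ∘ β = ∑ aᵢ β^(q^i)`. -/
noncomputable def polyAct (q : ℕ) {K L : Type*} [Field K] [Field L] [Algebra K L]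
    (f : Polynomial K) (β : L) : L :=
  ∑ i ∈ Finset.range (f.natDegree + 1), f.coeff i • β ^ q ^ i

open Polynomial

section Linearized

variable {K L : Type*} [Field K] [Field L] [Algebra K L]

noncomputable def linearizedPoly (q : ℕ) (u : K[X]) : L[X] :=
  ∑ i ∈ Finset.range (u.natDegree + 1), C (algebraMap K L (u.coeff i)) * X ^ q ^ i

theorem eval_linearizedPoly (q : ℕ) (u : K[X]) (β : L) :
    (linearizedPoly q u).eval β = polyAct q u β := by
  simp [linearizedPoly, polyAct, eval_finsetSum, Algebra.smul_def]

theorem natDegree_linearizedPoly_le {q : ℕ} (hq : 0 < q) (u : K[X]) :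
    (linearizedPoly q u : L[X]).natDegree ≤ q ^ u.natDegree := by
  refine natDegree_sum_le_of_forall_le _ _ fun i hi => (natDegree_C_mul_le _ _).trans ?_
  rw [natDegree_X_pow]
  exact Nat.pow_le_pow_right hq (Nat.lt_succ_iff.mp (Finset.mem_range.mp hi))

theorem coeff_linearizedPoly_pow_natDegree {q : ℕ} (hq : 1 < q) (u : K[X]) :
    (linearizedPoly q u : L[X]).coeff (q ^ u.natDegree) = algebraMap K L u.leadingCoeff := by
  rw [linearizedPoly, finsetSum_coeff,
    Finset.sum_eq_single_of_mem _ (Finset.self_mem_range_succ _)]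
  · simp [coeff_C_mul]
  · intro i _ hi
    rw [coeff_C_mul, coeff_X_pow, if_neg fun h => hi (Nat.pow_right_injective hq h.symm), mul_zero]

theorem card_polyAct_eq_zero_le [Finite L] {q : ℕ} (hq : 1 < q) {u : K[X]} (hu : u ≠ 0) :
    Nat.card {β : L // polyAct q u β = 0} ≤ q ^ u.natDegree := by
  classical
  have := Fintype.ofFinite L
  have hF : (linearizedPoly q u : L[X]) ≠ 0 := fun h0 => by
    simpa [h0, hu] using (coeff_linearizedPoly_pow_natDegree (L := L) hq u).symm
  calc Nat.card {β : L // polyAct q u β = 0}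
      = (Finset.univ.filter fun β : L => polyAct q u β = 0).card := by
        rw [Nat.card_eq_fintype_card, Fintype.card_subtype]
    _ ≤ (linearizedPoly q u : L[X]).natDegree := card_le_degree_of_subset_roots fun β hβ => by
        simpa [mem_roots hF, ← eval_linearizedPoly (L := L) q u β] using hβ
    _ ≤ q ^ u.natDegree := natDegree_linearizedPoly_le (by omega) u

end Linearized

section Frobenius

open FiniteField

variable {K L : Type*} [Field K] [Fintype K] [Field L] [Algebra K L]

theorem polyAct_card_eq_aeval_frobenius (u : K[X]) :
    polyAct (Fintype.card K) u = aeval (frobeniusAlgHom K L).toLinearMap u := by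
  ext β
  simp [polyAct, aeval_eq_sum_range, Module.End.coe_pow, coe_frobeniusAlgHom, pow_iterate]

theorem finrank_ker_aeval_frobenius_le [Finite L] {u : K[X]} (hu : u ≠ 0) :
    Module.finrank K (LinearMap.ker (aeval (frobeniusAlgHom K L).toLinearMap u)) ≤
      u.natDegree := by
  have hq : 1 < Fintype.card K := Fintype.one_lt_card
  have hcard : Nat.card (LinearMap.ker (aeval (frobeniusAlgHom K L).toLinearMap u)) ≤
      Fintype.card K ^ u.natDegree := by
    have := card_polyAct_eq_zero_le (L := L) hq hu
    rwa [polyAct_card_eq_aeval_frobenius] at this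
  rwa [Module.natCard_eq_pow_finrank (K := K), Nat.card_eq_fintype_card,
    Nat.pow_le_pow_iff_right hq] at hcard

end Frobenius

theorem LinearMap.range_eq_ker_of_finrank_ker_le {K U V W : Type*} [DivisionRing K]
    [AddCommGroup U] [Module K U] [FiniteDimensional K U] [AddCommGroup V] [Module K V]
    [FiniteDimensional K V] [AddCommGroup W] [Module K W]
    {S : U →ₗ[K] V} {T : V →ₗ[K] W} (hTS : T ∘ₗ S = 0) {a b : ℕ}
    (hT : Module.finrank K (LinearMap.ker T) ≤ a) (hS : Module.finrank K (LinearMap.ker S) ≤ b)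
    (hab : a + b ≤ Module.finrank K U) :
    LinearMap.range S = LinearMap.ker T ∧ Module.finrank K (LinearMap.ker T) = a := by
  have hle : LinearMap.range S ≤ LinearMap.ker T := LinearMap.range_le_ker_iff.mpr hTS
  have hrank := LinearMap.finrank_range_add_finrank_ker S
  have hge : a ≤ Module.finrank K (LinearMap.range S) := by omega
  have heq := Submodule.eq_of_le_of_finrank_le hle (hT.trans hge)
  exact ⟨heq, le_antisymm hT (heq ▸ hge)⟩

theorem Polynomial.Monic.dvd_of_mem_of_natDegree_le {K : Type*} [Field K] {I : Ideal K[X]}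
    {h u : K[X]} (hh : h.Monic) (hhI : h ∈ I)
    (hmin : ∀ h' ∈ I, h'.Monic → h.natDegree ≤ h'.natDegree) (hu : u ∈ I) : h ∣ u := by
  rw [← modByMonic_eq_zero_iff_dvd hh]
  by_contra hr
  have hrI : u %ₘ h * C (u %ₘ h).leadingCoeff⁻¹ ∈ I := by
    rw [modByMonic_eq_sub_mul_div]
    exact I.mul_mem_right _ (I.sub_mem hu (I.mul_mem_right _ hhI))
  have hle := hmin _ hrI (monic_mul_leadingCoeff_inv hr)
  rw [natDegree_mul_leadingCoeff_inv _ hr] at hle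
  have hh1 : h ≠ 1 := by
    rintro rfl
    simp at hr
  exact hle.not_gt (natDegree_modByMonic_lt u hh hh1)

namespace AddChar

variable {A B M : Type*} [AddCommGroup A] [AddCommGroup B] [CommMonoid M]

def dualMap (T : A →+ B) : AddChar B M →* AddChar A M where
  toFun ψ := ψ.compAddMonoidHom T
  map_one' := rfl
  map_mul' _ _ := rfl

@[simp] theorem dualMap_apply (T : A →+ B) (ψ : AddChar B M) (a : A) :
    dualMap T ψ a = ψ (T a) := rfl

def annihilator (H : AddSubgroup A) : Subgroup (AddChar A M) where
  carrier := {ψ | ∀ x ∈ H, ψ x = 1}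
  one_mem' _ _ := rfl
  mul_mem' ha hb x hx := by rw [mul_apply, ha x hx, hb x hx, mul_one]
  inv_mem' ha x hx := by rw [inv_apply, ha (-x) (neg_mem hx)]

theorem mem_annihilator {H : AddSubgroup A} {ψ : AddChar A M} :
    ψ ∈ annihilator H ↔ ∀ x ∈ H, ψ x = 1 := Iff.rfl

theorem range_dualMap_mk (H : AddSubgroup A) :
    (dualMap (QuotientAddGroup.mk' H) : AddChar (A ⧸ H) M →* _).range = annihilator H := by
  ext ψ
  constructor
  · rintro ⟨φ, rfl⟩ x hx
    rw [dualMap_apply, QuotientAddGroup.mk'_apply, (QuotientAddGroup.eq_zero_iff x).mpr hx,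
      map_zero_eq_one]
  · intro hψ
    refine ⟨toAddMonoidHomEquiv.symm (QuotientAddGroup.lift H ψ.toAddMonoidHom hψ), ?_⟩
    ext x
    rfl

theorem ker_dualMap (T : A →+ B) :
    (dualMap T : AddChar B M →* _).ker = annihilator T.range := by
  ext ψ
  simp [mem_annihilator, AddChar.eq_one_iff]

variable [Finite A]

theorem natCard_eq : Nat.card (AddChar A ℂ) = Nat.card A := by
  have := Fintype.ofFinite A
  rw [Nat.card_eq_fintype_card, card_eq, Nat.card_eq_fintype_card]

theorem card_annihilator (H : AddSubgroup A) :
    Nat.card (annihilator H : Subgroup (AddChar A ℂ)) = H.index := by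
  have hinj : Function.Injective (dualMap (QuotientAddGroup.mk' H) : AddChar (A ⧸ H) ℂ →* _) :=
    compAddMonoidHom_injective_left _ (QuotientAddGroup.mk'_surjective H)
  rw [← range_dualMap_mk, ← Nat.card_congr (MonoidHom.ofInjective hinj).toEquiv, natCard_eq,
    H.index_eq_card]

variable [Finite B]

theorem range_dualMap (T : A →+ B) :
    (dualMap T : AddChar B ℂ →* _).range = annihilator T.ker := by
  refine Subgroup.eq_of_le_of_card_ge ?_ ?_
  · rintro _ ⟨ψ, rfl⟩ x hx
    rw [dualMap_apply, hx, map_zero_eq_one]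
  · have hB := (dualMap T : AddChar B ℂ →* _).ker.card_mul_index
    have hB' := T.range.card_mul_index
    rw [Subgroup.index_ker, ker_dualMap, card_annihilator, natCard_eq, ← hB', mul_comm] at hB
    rw [card_annihilator, AddSubgroup.index_ker]
    exact (Nat.eq_of_mul_eq_mul_right (Nat.pos_of_ne_zero T.range.index_ne_zero_of_finite) hB).ge

theorem card_setOf_eq_comp (T : A →+ B) {χ : AddChar A ℂ} (hχ : ∀ x ∈ T.ker, χ x = 1) :
    Nat.card {ψ : AddChar B ℂ | ∀ a, χ a = ψ (T a)} = T.range.index := by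
  obtain ⟨ψ₀, rfl⟩ : χ ∈ (dualMap T).range := range_dualMap T ▸ hχ
  have hfiber : {ψ : AddChar B ℂ | ∀ a, dualMap T ψ₀ a = ψ (T a)} =
      dualMap T ⁻¹' {dualMap T ψ₀} := by
    ext ψ
    simp [AddChar.ext_iff, eq_comm]
  rw [hfiber, Nat.card_congr ((dualMap T).fiberEquivKer ψ₀), ker_dualMap, card_annihilator]

end AddChar

/-- The `𝔽_q`-order of `χ` is the monic generator of this ideal. -/
def AddChar.orderIdeal {R V M : Type*} [CommSemiring R] [AddCommMonoid V] [Module R V]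
    [Monoid M] (φ : Module.End R V) (χ : AddChar V M) : Ideal R[X] where
  carrier := {u | ∀ v, χ (aeval φ u v) = 1}
  add_mem' hu hv v := by
    rw [map_add, LinearMap.add_apply, AddChar.map_add_eq_mul, hu v, hv v, one_mul]
  zero_mem' v := by rw [map_zero, LinearMap.zero_apply, AddChar.map_zero_eq_one]
  smul_mem' c u hu v := by
    rw [smul_eq_mul, mul_comm, map_mul, Module.End.mul_apply]
    exact hu _

open FiniteField AddChar in
theorem stmt3_general (q n k : ℕ)
    (K : Type*) [Field K] [Fintype K] (hK : Fintype.card K = q)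
    (L : Type*) [Field L] [Fintype L] [Algebra K L]
    (hrank : Module.finrank K L = n)
    (f : Polynomial K) (hmonic : f.Monic) (hdvd : f ∣ Polynomial.X ^ n - 1)
    (hdeg : f.natDegree = k)
    (χ : AddChar L ℂ)
    -- `h` is the 𝔽_q-order of χ: the monic polynomial of least degree with h ∘ χ trivial
    (h : Polynomial K) (hhm : h.Monic)
    (htriv : ∀ α : L, χ (polyAct q h α) = 1)
    (hmin : ∀ h' : Polynomial K, h'.Monic → (∀ α : L, χ (polyAct q h' α) = 1) →
      h.natDegree ≤ h'.natDegree) :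
    (h ∣ (Polynomial.X ^ n - 1) / f →
      Nat.card {ψ : AddChar L ℂ | ∀ α : L, χ α = ψ (polyAct q f α)} = q ^ k) ∧
    (¬ h ∣ (Polynomial.X ^ n - 1) / f →
      {ψ : AddChar L ℂ | ∀ α : L, χ α = ψ (polyAct q f α)} = ∅) := by
  subst hK hrank hdeg
  set φ := (frobeniusAlgHom K L).toLinearMap
  simp only [polyAct_card_eq_aeval_frobenius] at htriv hmin ⊢
  obtain ⟨g, hg⟩ := hdvd
  have hgm : g.Monic := hmonic.of_mul_monic_left (hg ▸ monic_X_pow_sub_C 1 Module.finrank_pos.ne')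
  have hfg : aeval φ f * aeval φ g = 0 := by
    rw [← map_mul, ← hg, ← minpoly_frobeniusAlgHom, minpoly.aeval]
  obtain ⟨hrange, hfinrank⟩ := LinearMap.range_eq_ker_of_finrank_ker_le hfg
    (finrank_ker_aeval_frobenius_le hmonic.ne_zero) (finrank_ker_aeval_frobenius_le hgm.ne_zero)
    (by rw [← hmonic.natDegree_mul hgm, ← hg, ← C_1, natDegree_X_pow_sub_C])
  have hdvd_iff : h ∣ g ↔ g ∈ orderIdeal φ χ :=
    ⟨fun ⟨c, hc⟩ => hc ▸ Ideal.mul_mem_right _ _ htriv,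
      hhm.dvd_of_mem_of_natDegree_le htriv fun h' hh' hm => hmin h' hm hh'⟩
  rw [hg, mul_div_cancel_left₀ g hmonic.ne_zero, hdvd_iff]
  refine ⟨fun hχ => ?_, fun hχ => ?_⟩
  · have hker : ∀ x ∈ (aeval φ f).toAddMonoidHom.ker, χ x = 1 := by
      intro x hx
      obtain ⟨v, rfl⟩ : x ∈ LinearMap.range (aeval φ g) := hrange ▸ hx
      exact hχ v
    refine (card_setOf_eq_comp _ hker).trans ?_
    rw [AddSubgroup.index_range, ← hfinrank, ← Nat.card_eq_fintype_card,
      ← Module.natCard_eq_pow_finrank]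
    rfl
  · refine Set.eq_empty_of_forall_notMem fun ψ hψ => hχ fun v => ?_
    rw [hψ, ← Module.End.mul_apply, hfg, LinearMap.zero_apply, map_zero_eq_one]

theorem stmt3 (q n k : ℕ) (hq : 1 < q) (hn : 0 < n)
    (K : Type*) [Field K] [Fintype K] (hK : Fintype.card K = q)
    (L : Type*) [Field L] [Fintype L] [Algebra K L]
    (hrank : Module.finrank K L = n)
    (f : Polynomial K) (hmonic : f.Monic) (hdvd : f ∣ Polynomial.X ^ n - 1)
    (hdeg : f.natDegree = k)
    (χ : AddChar L ℂ)
    -- `h` is the 𝔽_q-order of χ: the monic polynomial of least degree with h ∘ χ trivial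
    (h : Polynomial K) (hhm : h.Monic)
    (htriv : ∀ α : L, χ (polyAct q h α) = 1)
    (hmin : ∀ h' : Polynomial K, h'.Monic → (∀ α : L, χ (polyAct q h' α) = 1) →
      h.natDegree ≤ h'.natDegree) :
    (h ∣ (Polynomial.X ^ n - 1) / f →
      Nat.card {ψ : AddChar L ℂ | ∀ α : L, χ α = ψ (polyAct q f α)} = q ^ k) ∧
    (¬ h ∣ (Polynomial.X ^ n - 1) / f →
      {ψ : AddChar L ℂ | ∀ α : L, χ α = ψ (polyAct q f α)} = ∅) :=
  stmt3_general q n k K hK L hrank f hmonic hdvd hdeg χ h hhm htriv hmin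
end

section
/- Let β ∈ F_{q^n} be a normal element over F_q and let f ∈ F_q[x] be a monic divisor of x^n - 1 of degree k. Then α = f ∘ β is a k-normal element of F_{q^n} over F_q, i.e., gcd(x^n - 1, g_α(x)) has degree k, where g_α(x) = Σ_{i=0}^{n-1} α^{q^i} x^{n-1-i}. -/
open scoped Classical

/-!
Write `g γ = ∑_{i<n} γ^(q^i) X^(n-1-i)`. Modulo `X^n - 1`, multiplication by `X` shifts the
conjugates of `γ` one step, so `X · g γ ≡ g (γ^q)` and hence `f · g β ≡ g (f ∘ β)`. When `β` is
normal, `g β` is coprime to `X^n - 1`: a multiple `h · g β` of `X^n - 1` with `deg h < n` makes the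
linearized polynomial `∑ hⱼ x^(q^j)` vanish on the basis `β^(q^i)`, hence on all of `L`, and
Dedekind's independence of the Frobenius powers forces `h = 0`. Therefore
`gcd (X^n - 1, g (f ∘ β)) = gcd (X^n - 1, f · g β)` is `f`, of degree `k`.
-/

open Polynomial Finset

section conjugatesPoly

variable {R : Type*} [CommRing R] (q n : ℕ)

noncomputable def conjugatesPoly (γ : R) : R[X] :=
  ∑ i ∈ range n, C (γ ^ q ^ i) * X ^ (n - 1 - i)

variable {q n}

theorem X_mul_conjugatesPoly_add_C {m : ℕ} {γ : R} (hγ : γ ^ q ^ (m + 1) = γ) :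
    X * conjugatesPoly q (m + 1) γ + C γ =
      conjugatesPoly q (m + 1) (γ ^ q) + C γ * X ^ (m + 1) := by
  simp only [conjugatesPoly, Nat.add_sub_cancel, mul_sum]
  have hlast : (γ ^ q) ^ q ^ m = γ := by rw [← pow_mul, ← pow_succ', hγ]
  have hshift : ∀ i ∈ range m, X * (C (γ ^ q ^ (i + 1)) * X ^ (m - (i + 1)))
      = C ((γ ^ q) ^ q ^ i) * X ^ (m - i) := fun i hi => by
    rw [← pow_mul, ← pow_succ', mul_left_comm, ← pow_succ', Nat.sub_add_eq, Nat.sub_add_cancel]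
    exact Nat.sub_pos_of_lt (mem_range.mp hi)
  rw [sum_range_succ', sum_range_succ, sum_congr rfl hshift, hlast]
  simp only [pow_zero, pow_one, Nat.sub_zero, Nat.sub_self]
  ring

theorem X_pow_sub_one_dvd_X_mul_conjugatesPoly_sub {γ : R} (hn : 0 < n) (hγ : γ ^ q ^ n = γ) :
    (X ^ n - 1 : R[X]) ∣ X * conjugatesPoly q n γ - conjugatesPoly q n (γ ^ q) := by
  obtain ⟨m, rfl⟩ : ∃ m, n = m + 1 := ⟨n - 1, by omega⟩
  exact Dvd.intro_left (C γ) (by linear_combination (X_mul_conjugatesPoly_add_C hγ).symm)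

theorem X_pow_sub_one_dvd_X_pow_mul_conjugatesPoly_sub {γ : R} (hn : 0 < n)
    (hγ : γ ^ q ^ n = γ) (j : ℕ) :
    (X ^ n - 1 : R[X]) ∣ X ^ j * conjugatesPoly q n γ - conjugatesPoly q n (γ ^ q ^ j) := by
  induction j generalizing γ with
  | zero => simp
  | succ j ih =>
    have hγq : (γ ^ q) ^ q ^ n = γ ^ q := by rw [← pow_mul, mul_comm, pow_mul, hγ]
    have hsplit : X ^ (j + 1) * conjugatesPoly q n γ - conjugatesPoly q n (γ ^ q ^ (j + 1)) =
        X ^ j * (X * conjugatesPoly q n γ - conjugatesPoly q n (γ ^ q)) +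
          (X ^ j * conjugatesPoly q n (γ ^ q) - conjugatesPoly q n ((γ ^ q) ^ q ^ j)) := by
      rw [← pow_mul, ← pow_succ']
      ring
    rw [hsplit]
    exact dvd_add (dvd_mul_of_dvd_right (X_pow_sub_one_dvd_X_mul_conjugatesPoly_sub hn hγ) _)
      (ih hγq)

theorem X_pow_sub_one_dvd_mul_conjugatesPoly_sub {γ : R} (hn : 0 < n) (hγ : γ ^ q ^ n = γ)
    {h : R[X]} {N : ℕ} (hN : h.natDegree < N) :
    (X ^ n - 1 : R[X]) ∣
      h * conjugatesPoly q n γ - ∑ j ∈ range N, C (h.coeff j) * conjugatesPoly q n (γ ^ q ^ j) := by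
  conv_rhs => enter [1, 1]; rw [h.as_sum_range' N hN]
  rw [sum_mul, ← sum_sub_distrib]
  refine dvd_sum fun j _ => ?_
  rw [← C_mul_X_pow_eq_monomial, mul_assoc, ← mul_sub]
  exact dvd_mul_of_dvd_right (X_pow_sub_one_dvd_X_pow_mul_conjugatesPoly_sub hn hγ j) _

theorem coeff_conjugatesPoly (γ : R) {i : ℕ} (hi : i < n) :
    (conjugatesPoly q n γ).coeff (n - 1 - i) = γ ^ q ^ i := by
  rw [conjugatesPoly, finsetSum_coeff, sum_eq_single i]
  · rw [coeff_C_mul_X_pow, if_pos rfl]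
  · intro j hj hji
    rw [mem_range] at hj
    rw [coeff_C_mul_X_pow, if_neg (by omega)]
  · simp [hi]

theorem natDegree_conjugatesPoly_le (γ : R) : (conjugatesPoly q n γ).natDegree ≤ n - 1 :=
  natDegree_sum_le_of_forall_le _ _ fun _ _ =>
    (natDegree_C_mul_X_pow_le _ _).trans (Nat.sub_le _ _)

end conjugatesPoly

theorem Polynomial.isCoprime_of_forall_dvd_mul_eq_zero {K : Type*} [Field K] {P G : K[X]}
    (hP : P ≠ 0) (h : ∀ m : K[X], m.natDegree < P.natDegree → P ∣ m * G → m = 0) :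
    IsCoprime P G := by
  refine EuclideanDomain.isCoprime_of_dvd (fun h0 => hP h0.1) fun d hd hd0 ⟨m, hm⟩ ⟨s, hs⟩ => ?_
  have hm0 : m ≠ 0 := by
    rintro rfl
    exact hP (by rw [hm, mul_zero])
  have hdeg : 0 < d.natDegree :=
    natDegree_pos_iff_degree_pos.mpr (degree_pos_of_ne_zero_of_nonunit hd0 hd)
  refine hm0 (h m ?_ ⟨s, by rw [hm, hs]; ring⟩)
  rw [hm, natDegree_mul hd0 hm0]
  omega

theorem EuclideanDomain.associated_gcd_of_dvd_sub_mul {R : Type*} [EuclideanDomain R]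
    [DecidableEq R] {P G A F : R} (hcop : IsCoprime P G) (hFP : F ∣ P) (hA : P ∣ A - F * G) :
    Associated (gcd P A) F := by
  have hFA : F ∣ A := by simpa using dvd_add (hFP.trans hA) (dvd_mul_right F G)
  refine associated_of_dvd_dvd ?_ (dvd_gcd hFP hFA)
  have hgFG : gcd P A ∣ F * G := by
    simpa using dvd_sub (gcd_dvd_right P A) ((gcd_dvd_left P A).trans hA)
  exact (hcop.of_isCoprime_of_dvd_left (gcd_dvd_left P A)).dvd_of_dvd_mul_right hgFG

namespace FiniteField

variable {K L : Type*} [Field K] [Fintype K] [Field L] [Algebra K L]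

theorem frobeniusAlgHom_pow_apply (i : ℕ) (x : L) :
    (frobeniusAlgHom K L ^ i) x = x ^ Fintype.card K ^ i := by
  rw [AlgHom.coe_pow, coe_frobeniusAlgHom, pow_iterate]

theorem pow_card_pow_finrank [Finite L] (x : L) :
    x ^ Fintype.card K ^ Module.finrank K L = x := by
  rw [← frobeniusAlgHom_pow_apply, ← orderOf_frobeniusAlgHom, pow_orderOf_eq_one, AlgHom.one_apply]

theorem eq_zero_of_forall_basis_sum_mul_pow_card_pow_eq_zero [Finite L] {ι : Type*}
    (b : Module.Basis ι K L) {c : ℕ → L}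
    (hc : ∀ i, ∑ j ∈ range (Module.finrank K L), c j * b i ^ Fintype.card K ^ j = 0)
    {j : ℕ} (hj : j < Module.finrank K L) : c j = 0 := by
  have hsum : ∑ j : Fin (Module.finrank K L), c j • (frobeniusAlgHom K L ^ j.1).toLinearMap = 0 :=
    b.ext fun i => by
      simpa [frobeniusAlgHom_pow_apply, -AlgHom.coe_pow,
        Fin.sum_univ_eq_sum_range (fun j => c j * b i ^ Fintype.card K ^ j)] using hc i
  have hli := (linearIndependent_algHom_toLinearMap K L L).comp _
    (bijective_frobeniusAlgHom_pow K L).1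
  exact Fintype.linearIndependent_iff.mp hli (fun j => c j) hsum ⟨j, hj⟩

theorem polyAct_pow_card_pow (f : K[X]) (β : L) (i : ℕ) :
    polyAct (Fintype.card K) f β ^ Fintype.card K ^ i =
      polyAct (Fintype.card K) f (β ^ Fintype.card K ^ i) := by
  simp only [polyAct, ← frobeniusAlgHom_pow_apply, map_sum, map_smul]
  simp only [frobeniusAlgHom_pow_apply, pow_right_comm]

theorem conjugatesPoly_polyAct (n : ℕ) (f : K[X]) (β : L) :
    conjugatesPoly (Fintype.card K) n (polyAct (Fintype.card K) f β) =
      ∑ j ∈ range (f.natDegree + 1),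
        C (algebraMap K L (f.coeff j)) *
          conjugatesPoly (Fintype.card K) n (β ^ Fintype.card K ^ j) := by
  simp only [conjugatesPoly, polyAct_pow_card_pow]
  simp only [polyAct, map_sum, sum_mul, mul_sum]
  rw [sum_comm]
  refine sum_congr rfl fun i _ => sum_congr rfl fun j _ => ?_
  rw [Algebra.smul_def, map_mul, pow_right_comm, mul_assoc]

theorem isCoprime_X_pow_sub_one_conjugatesPoly [Finite L] {n : ℕ} {β : L}
    (b : Module.Basis (Fin n) K L) (hb : ∀ i, b i = β ^ Fintype.card K ^ (i : ℕ)) :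
    IsCoprime (X ^ n - 1 : L[X]) (conjugatesPoly (Fintype.card K) n β) := by
  set q := Fintype.card K
  have hrank : Module.finrank K L = n := by simpa using Module.finrank_eq_card_basis b
  have hn : 0 < n := hrank ▸ Module.finrank_pos
  have hP : (X ^ n - 1 : L[X]).natDegree = n := by rw [← C_1, natDegree_X_pow_sub_C]
  refine isCoprime_of_forall_dvd_mul_eq_zero (by rw [← C_1]; exact X_pow_sub_C_ne_zero hn 1)
    fun h hdeg hdvd => ?_
  rw [hP] at hdeg
  set S := ∑ j ∈ range n, C (h.coeff j) * conjugatesPoly q n (β ^ q ^ j)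
  have hS : S = 0 := by
    refine eq_zero_of_dvd_of_natDegree_lt (p := X ^ n - 1) ?_ ?_
    · rw [← sub_sub_cancel (h * conjugatesPoly q n β) S]
      exact dvd_sub hdvd
        (X_pow_sub_one_dvd_mul_conjugatesPoly_sub hn (hrank ▸ pow_card_pow_finrank β) hdeg)
    · refine (natDegree_sum_le_of_forall_le (n := n - 1) _ _ fun j _ => ?_).trans_lt
        (by rw [hP]; omega)
      exact (natDegree_C_mul_le _ _).trans (natDegree_conjugatesPoly_le _)
  have hc : ∀ i, ∑ j ∈ range (Module.finrank K L), h.coeff j * b i ^ q ^ j = 0 := fun i => by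
    have hcoeff := congr_arg (coeff · (n - 1 - i)) hS
    simp only [S, finsetSum_coeff, coeff_C_mul, coeff_conjugatesPoly _ i.isLt, coeff_zero]
      at hcoeff
    rw [hb, hrank]
    simpa only [pow_right_comm] using hcoeff
  ext j
  rw [coeff_zero]
  by_cases hj : j < n
  · exact eq_zero_of_forall_basis_sum_mul_pow_card_pow_eq_zero b hc (hrank ▸ hj)
  · exact coeff_eq_zero_of_natDegree_lt (by omega)

theorem X_pow_sub_one_dvd_conjugatesPoly_polyAct_sub {n : ℕ} (hn : 0 < n) (f : K[X]) {β : L}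
    (hβ : β ^ Fintype.card K ^ n = β) :
    (X ^ n - 1 : L[X]) ∣ conjugatesPoly (Fintype.card K) n (polyAct (Fintype.card K) f β) -
      f.map (algebraMap K L) * conjugatesPoly (Fintype.card K) n β := by
  have hF := X_pow_sub_one_dvd_mul_conjugatesPoly_sub hn hβ
    (h := f.map (algebraMap K L)) (N := f.natDegree + 1) (by rw [natDegree_map]; omega)
  rw [conjugatesPoly_polyAct, ← dvd_neg, neg_sub]
  simpa only [coeff_map] using hF

end FiniteField

theorem stmt4_general (q n k : ℕ)
    (K : Type*) [Field K] [Fintype K] (hK : Fintype.card K = q)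
    (L : Type*) [Field L] [Fintype L] [Algebra K L]
    (β : L) (b : Module.Basis (Fin n) K L) (hb : ∀ i : Fin n, b i = β ^ q ^ (i : ℕ))
    (f : Polynomial K) (hdvd : f ∣ Polynomial.X ^ n - 1)
    (hdeg : f.natDegree = k) :
    (EuclideanDomain.gcd (Polynomial.X ^ n - 1 : Polynomial L)
      (∑ i ∈ Finset.range n,
        Polynomial.C ((polyAct q f β) ^ q ^ i) * Polynomial.X ^ (n - 1 - i))).natDegree
      = k := by
  subst hK
  have hrank : Module.finrank K L = n := by simpa using Module.finrank_eq_card_basis b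
  have hcong := FiniteField.X_pow_sub_one_dvd_conjugatesPoly_polyAct_sub
    (hrank ▸ Module.finrank_pos) f (hrank ▸ FiniteField.pow_card_pow_finrank β)
  have hFP : f.map (algebraMap K L) ∣ X ^ n - 1 := by simpa using map_dvd (algebraMap K L) hdvd
  have hgcd := EuclideanDomain.associated_gcd_of_dvd_sub_mul
    (FiniteField.isCoprime_X_pow_sub_one_conjugatesPoly b hb) hFP hcong
  rw [← hdeg, ← natDegree_map (algebraMap K L)]
  exact natDegree_eq_of_degree_eq (degree_eq_degree_of_associated hgcd)

theorem stmt4 (q n k : ℕ) (hq : 1 < q) (hn : 0 < n)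
    (K : Type*) [Field K] [Fintype K] (hK : Fintype.card K = q)
    (L : Type*) [Field L] [Fintype L] [Algebra K L]
    (hrank : Module.finrank K L = n)
    (β : L) (b : Module.Basis (Fin n) K L) (hb : ∀ i : Fin n, b i = β ^ q ^ (i : ℕ))
    (f : Polynomial K) (hmonic : f.Monic) (hdvd : f ∣ Polynomial.X ^ n - 1)
    (hdeg : f.natDegree = k) :
    (EuclideanDomain.gcd (Polynomial.X ^ n - 1 : Polynomial L)
      (∑ i ∈ Finset.range n,
        Polynomial.C ((polyAct q f β) ^ q ^ i) * Polynomial.X ^ (n - 1 - i))).natDegree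
      = k :=
  stmt4_general q n k K hK L β b hb f hdvd hdeg
end

section
/- Let r be a divisor of q^n - 1, let η be a multiplicative character of F_{q^n} and ψ a non-trivial additive character of F_{q^n}. Then |Σ_{α ∈ F_{q^n}^*} η(α) ψ(α^r)| ≤ r · q^{n/2}. -/
/-!
Mellin inversion on `Fˣ` (orthogonality of multiplicative characters) expands `ψ(α ^ r)` in
characters and turns the sum into `∑_{χ ^ r = η} g(χ, ψ)`. Every Gauss sum has absolute value at
most `√(q ^ n)`, and since `Fˣ` is cyclic a character is determined by its value at a generator,
which for `χ ^ r = η` is one of the at most `r` roots of `X ^ r - η(g)`.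
-/

open Finset

theorem sum_units_eq_sum_of_map_zero {G₀ β : Type*} [GroupWithZero G₀] [Fintype G₀]
    [DecidableEq G₀] [AddCommMonoid β] {f : G₀ → β} (hf : f 0 = 0) :
    ∑ u : G₀ˣ, f u = ∑ a, f a :=
  calc ∑ u : G₀ˣ, f u = ∑ a ∈ univ.map ⟨Units.val, Units.val_injective⟩, f a :=
        (sum_map univ ⟨Units.val, Units.val_injective⟩ f).symm
    _ = ∑ a, f a := by
      refine sum_subset (subset_univ _) fun a _ ha ↦ ?_
      obtain rfl : a = 0 := by
        by_contra h
        exact ha (mem_map.2 ⟨Units.mk0 a h, mem_univ _, rfl⟩)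
      exact hf

namespace MulChar

section Orthogonality

variable {M R : Type*} [CommMonoid M] [Finite M] [CommRing R] [IsDomain R]
  [HasEnoughRootsOfUnity R (Monoid.exponent Mˣ)] [Fintype (MulChar M R)]

theorem sum_characters_eq_zero {a : M} (ha : a ≠ 1) : ∑ χ : MulChar M R, χ a = 0 := by
  obtain ⟨χ, hχ⟩ := exists_apply_ne_one_of_hasEnoughRootsOfUnity M R ha
  refine eq_zero_of_mul_eq_self_left hχ ?_
  simp only [mul_sum, ← mul_apply]
  exact Fintype.sum_bijective _ (Group.mulLeft_bijective χ) _ _ fun _ ↦ rfl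

theorem sum_characters_eq [DecidableEq M] (a : M) :
    ∑ χ : MulChar M R, χ a = if a = 1 then (Nat.card Mˣ : R) else 0 := by
  split_ifs with ha
  · simp [ha, ← card_eq_card_units_of_hasEnoughRootsOfUnity M R, Nat.card_eq_fintype_card]
  · exact sum_characters_eq_zero ha

end Orthogonality

theorem sum_apply_inv_mul_sum_apply_mul {F R : Type*} [Field F] [Fintype F] [CommRing R]
    [IsDomain R] [HasEnoughRootsOfUnity R (Monoid.exponent Fˣ)] [Fintype (MulChar F R)]
    {a : F} (ha : a ≠ 0) (f : F → R) :
    ∑ χ : MulChar F R, χ a⁻¹ * ∑ b, χ b * f b = Nat.card Fˣ * f a := by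
  classical
  simp_rw [mul_sum, ← mul_assoc, ← map_mul]
  rw [sum_comm]
  simp_rw [← sum_mul, sum_characters_eq, inv_mul_eq_one₀ ha, ite_mul, zero_mul]
  simp

theorem mul_inv_pow_apply {F R : Type*} [Field F] [CommRing R] [Nontrivial R]
    (η χ : MulChar F R) (r : ℕ) (a : F) : η a * χ (a ^ r)⁻¹ = (η * (χ ^ r)⁻¹) a := by
  rcases eq_or_ne a 0 with rfl | ha
  · simp only [MulChar.map_zero, zero_mul]
  obtain ⟨u, rfl⟩ := ha.isUnit
  rw [mul_apply, inv_apply', ← Units.val_inv_eq_inv_val, pow_apply_coe,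
    ← Units.val_pow_eq_pow_val, ← Units.val_inv_eq_inv_val, ← inv_pow, Units.val_pow_eq_pow_val,
    map_pow]

theorem card_filter_pow_eq_le {M R : Type*} [CommMonoid M] [IsCyclic Mˣ] [CommRing R]
    [IsDomain R] [Fintype (MulChar M R)] [DecidableEq (MulChar M R)] (η : MulChar M R) {r : ℕ}
    (hr : r ≠ 0) : #{χ | χ ^ r = η} ≤ r := by
  classical
  obtain ⟨g, hg⟩ := IsCyclic.exists_generator (α := Mˣ)
  calc #{χ | χ ^ r = η} ≤ (Polynomial.nthRoots r (η g)).toFinset.card := by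
        refine card_le_card_of_injOn (fun χ ↦ χ g) (fun χ hχ ↦ ?_)
          fun χ₁ _ χ₂ _ h ↦ (eq_iff hg _ _).mpr h
        rw [mem_coe, mem_filter] at hχ
        rw [mem_coe, Multiset.mem_toFinset, Polynomial.mem_nthRoots (Nat.pos_of_ne_zero hr),
          ← pow_apply_coe, hχ.2]
    _ ≤ (Polynomial.nthRoots r (η g)).card := Multiset.toFinset_card_le _
    _ ≤ r := Polynomial.card_nthRoots r _

end MulChar

theorem norm_gaussSum_le {F : Type*} [Field F] [Fintype F] {ψ : AddChar F ℂ} (hψ : ψ ≠ 1)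
    (χ : MulChar F ℂ) : ‖gaussSum χ ψ‖ ≤ √(Fintype.card F) := by
  rcases eq_or_ne χ 1 with rfl | hχ
  · rw [gaussSum_one_left hψ, norm_neg, norm_one, Real.one_le_sqrt]
    exact_mod_cast Fintype.card_pos
  have h := gaussSum_mul_gaussSum_eq_card hχ (AddChar.IsPrimitive.of_ne_one hψ)
  rw [← star_gaussSum_eq, Complex.star_def, Complex.mul_conj'] at h
  have h' : ‖gaussSum χ ψ‖ ^ 2 = Fintype.card F := by exact_mod_cast h
  rw [Real.le_sqrt (norm_nonneg _) (Nat.cast_nonneg _), h']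

theorem sum_mulChar_mul_addChar_pow_eq_sum_gaussSum {F : Type*} [Field F] [Fintype F]
    [DecidableEq F] [Fintype (MulChar F ℂ)] [DecidableEq (MulChar F ℂ)] (η : MulChar F ℂ)
    (ψ : AddChar F ℂ) (r : ℕ) :
    ∑ a, η a * ψ (a ^ r) = ∑ χ with χ ^ r = η, gaussSum χ ψ := by
  have hN : (Nat.card Fˣ : ℂ) ≠ 0 := Nat.cast_ne_zero.mpr Nat.card_pos.ne'
  refine mul_left_cancel₀ hN ?_
  have inversion (a : F) : η a * (Nat.card Fˣ * ψ (a ^ r)) =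
      ∑ χ : MulChar F ℂ, η a * χ (a ^ r)⁻¹ * gaussSum χ ψ := by
    rcases eq_or_ne a 0 with rfl | ha
    · simp [MulChar.map_zero]
    · rw [← MulChar.sum_apply_inv_mul_sum_apply_mul (pow_ne_zero r ha), mul_sum]
      simp_rw [gaussSum, mul_assoc]
  calc (Nat.card Fˣ : ℂ) * ∑ a, η a * ψ (a ^ r)
      = ∑ χ : MulChar F ℂ, gaussSum χ ψ * ∑ a, (η * (χ ^ r)⁻¹) a := by
        simp_rw [mul_sum, mul_left_comm _ (η _), inversion, MulChar.mul_inv_pow_apply]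
        rw [sum_comm]
        simp_rw [mul_comm]
    _ = ∑ χ : MulChar F ℂ, if χ ^ r = η then Nat.card Fˣ * gaussSum χ ψ else 0 := by
        refine sum_congr rfl fun χ _ ↦ ?_
        rcases eq_or_ne (χ ^ r) η with h | h
        · rw [if_pos h, h, mul_inv_cancel, MulChar.sum_one_eq_card_units,
            Nat.card_eq_fintype_card, mul_comm]
        · rw [if_neg h, MulChar.sum_eq_zero_of_ne_one (mul_inv_eq_one.not.mpr (Ne.symm h)),
            mul_zero]
    _ = _ := by rw [← sum_filter, mul_sum]

theorem stmt8 (q n r : ℕ) (hq : 1 < q) (hn : 0 < n)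
    (F : Type*) [Field F] [Fintype F] [DecidableEq F] (hF : Fintype.card F = q ^ n)
    (hr : r ∣ q ^ n - 1)
    (η : MulChar F ℂ) (ψ : AddChar F ℂ) (hψ : ψ ≠ 1) :
    ‖∑ α : Fˣ, η (α : F) * ψ ((α : F) ^ r)‖
      ≤ (r : ℝ) * (q : ℝ) ^ ((n : ℝ) / 2) := by
  classical
  let : Fintype (MulChar F ℂ) := Fintype.ofFinite _
  have hr0 : r ≠ 0 := by
    rintro rfl
    have := Nat.one_lt_pow hn.ne' hq
    rw [zero_dvd_iff] at hr
    omega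
  have hsqrt : √(Fintype.card F : ℝ) = (q : ℝ) ^ ((n : ℝ) / 2) := by
    rw [hF, Nat.cast_pow, Real.sqrt_eq_rpow, ← Real.rpow_natCast,
      ← Real.rpow_mul (Nat.cast_nonneg _)]
    ring_nf
  rw [sum_units_eq_sum_of_map_zero (f := fun a ↦ η a * ψ (a ^ r)) (by simp [MulChar.map_zero]),
    sum_mulChar_mul_addChar_pow_eq_sum_gaussSum, ← hsqrt]
  calc ‖∑ χ with χ ^ r = η, gaussSum χ ψ‖ ≤ ∑ χ with χ ^ r = η, ‖gaussSum χ ψ‖ := norm_sum_le _ _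
    _ ≤ #{χ | χ ^ r = η} • √(Fintype.card F : ℝ) :=
        sum_le_card_nsmul _ _ _ fun χ _ ↦ norm_gaussSum_le hψ χ
    _ ≤ r * √(Fintype.card F : ℝ) := by
        rw [nsmul_eq_mul]
        gcongr
        exact_mod_cast MulChar.card_filter_pow_eq_le η hr0
end

section
/- If there exists a pair (α, β) ∈ F_{q^n}^* × F_{q^n} such that α is a primitive element, β is a normal element over F_q, and α^r = f ∘ β where f is a monic divisor of x^n - 1 of degree k and r divides q^n - 1, then the element α^r is simultaneously r-primitive and k-normal over F_q. -/
open scoped Classical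

/-!
Write `g_x = ∑_{i<n} x^{q^i} X^{n-1-i}`. Since `x^{q^n} = x`, applying Frobenius to `x` multiplies
`g_x` by `X` modulo `X^n - 1`; as `x ↦ g_x` is `𝔽_q`-linear, `g_{f ∘ β} ≡ f g_β`. If `θ` were a
common root of `X^n - 1` and `g_β`, the same congruence would make `x ↦ g_x(θ)`, a combination of
the distinct field embeddings `x ↦ x^{q^i}` with nonzero coefficients `θ^{n-1-i}`, vanish on the
normal basis, contradicting Dedekind's independence of characters. So `g_β` is coprime to
`X^n - 1`, and then `gcd(X^n - 1, g_{f ∘ β})` is `f` up to a unit.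
-/

open Polynomial Finset

noncomputable def conjPoly {L : Type*} [CommRing L] (q n : ℕ) (x : L) : L[X] :=
  ∑ i ∈ range n, C (x ^ q ^ i) * X ^ (n - 1 - i)

theorem conjPoly_pow {L : Type*} [CommRing L] {q n : ℕ} (hn : 0 < n) {x : L}
    (hx : x ^ q ^ n = x) :
    conjPoly q n (x ^ q) = X * conjPoly q n x - C x * (X ^ n - 1) := by
  obtain ⟨m, rfl⟩ := Nat.exists_eq_add_of_lt hn
  simp only [conjPoly, zero_add, Nat.add_sub_cancel] at hx ⊢
  have shift : ∀ i ∈ range m, X * (C (x ^ q ^ (i + 1)) * X ^ (m - (i + 1))) =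
      C ((x ^ q) ^ q ^ i) * X ^ (m - i) := by
    intro i hi
    rw [← pow_mul, ← pow_succ', mul_left_comm, ← pow_succ', Nat.sub_add_eq,
      Nat.sub_add_cancel (Nat.sub_pos_of_lt (mem_range.mp hi))]
  rw [sum_range_succ, mul_sum, sum_range_succ', sum_congr rfl shift, ← pow_mul, ← pow_succ', hx]
  simp only [pow_zero, pow_one, Nat.sub_zero, Nat.sub_self]
  ring

theorem X_pow_sub_one_dvd_conjPoly_pow_pow {L : Type*} [CommRing L] {q n : ℕ} (hn : 0 < n)
    (hfix : ∀ x : L, x ^ q ^ n = x) (x : L) (i : ℕ) :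
    X ^ n - 1 ∣ conjPoly q n (x ^ q ^ i) - X ^ i * conjPoly q n x := by
  rw [← AdjoinRoot.mk_eq_mk]
  induction i with
  | zero => simp
  | succ i ih =>
    rw [pow_succ, pow_mul, conjPoly_pow hn (hfix _), map_sub, map_mul, ih, map_mul, map_mul,
      AdjoinRoot.mk_self, mul_zero, sub_zero, pow_succ', map_mul, map_mul, mul_assoc]

section FiniteField

variable (K : Type*) {L : Type*} [Field K] [Fintype K]

theorem FiniteField.frobeniusAlgHom_pow_apply_s12 [CommRing L] [Algebra K L] (i : ℕ) (x : L) :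
    (FiniteField.frobeniusAlgHom K L ^ i) x = x ^ Fintype.card K ^ i := by
  rw [AlgHom.coe_pow, FiniteField.coe_frobeniusAlgHom, pow_iterate]

noncomputable def conjPolyLinearMap [CommRing L] [Algebra K L] (n : ℕ) : L →ₗ[K] L[X] where
  toFun := conjPoly (Fintype.card K) n
  map_add' x y := by
    simp only [conjPoly, ← FiniteField.frobeniusAlgHom_pow_apply_s12 K, map_add, add_mul,
      sum_add_distrib]
  map_smul' c x := by
    simp only [conjPoly, ← FiniteField.frobeniusAlgHom_pow_apply_s12 K, map_smul, RingHom.id_apply,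
      smul_sum, ← smul_C, smul_mul_assoc]

variable {K}

theorem X_pow_sub_one_dvd_conjPoly_polyAct [Field L] [Algebra K L] {n : ℕ} (hn : 0 < n)
    (hfix : ∀ x : L, x ^ Fintype.card K ^ n = x) (f : K[X]) (β : L) :
    X ^ n - 1 ∣ conjPoly (Fintype.card K) n (polyAct (Fintype.card K) f β) -
      f.map (algebraMap K L) * conjPoly (Fintype.card K) n β := by
  set q := Fintype.card K
  set mk := AdjoinRoot.mkₐ (X ^ n - 1 : L[X])
  have hmk (p : L[X]) : mk p = AdjoinRoot.mk _ p := rfl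
  let Φ : L →ₗ[K] AdjoinRoot (X ^ n - 1 : L[X]) :=
    (mk.toLinearMap.restrictScalars K).comp (conjPolyLinearMap K n)
  have hΦ (x : L) : Φ x = mk (conjPoly q n x) := rfl
  have hΦ_pow (i : ℕ) : Φ (β ^ q ^ i) = AdjoinRoot.root _ ^ i * mk (conjPoly q n β) := by
    rw [hΦ, hmk, hmk, (AdjoinRoot.mk_eq_mk).mpr (X_pow_sub_one_dvd_conjPoly_pow_pow hn hfix β i),
      map_mul, map_pow, AdjoinRoot.mk_X]
  rw [← AdjoinRoot.mk_eq_mk, ← hmk, ← hmk, ← hΦ, polyAct, map_sum]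
  simp only [map_smul, hΦ_pow, ← smul_mul_assoc, ← sum_mul, map_mul]
  congr 1
  rw [hmk, ← AdjoinRoot.aeval_eq, aeval_map_algebraMap, aeval_eq_sum_range]

end FiniteField

section Normal

variable {K L : Type*} [Field K] [Fintype K] [Field L] [Algebra K L]

theorem aeval_conjPoly {E : Type*} [CommRing E] [Algebra K E] [Algebra L E] [IsScalarTower K L E]
    (θ : E) (n : ℕ) (x : L) :
    aeval θ (conjPoly (Fintype.card K) n x) = ∑ i ∈ range n, θ ^ (n - 1 - i) *
      IsScalarTower.toAlgHom K L E ((FiniteField.frobeniusAlgHom K L ^ i) x) := by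
  simp [conjPoly, FiniteField.frobeniusAlgHom_pow_apply_s12, mul_comm]

theorem FiniteField.pow_card_pow_finrank_s12 [Fintype L] (x : L) :
    x ^ Fintype.card K ^ Module.finrank K L = x := by
  rw [← Module.card_eq_pow_finrank, FiniteField.pow_card]

theorem isCoprime_X_pow_sub_one_conjPoly [Fintype L] {n : ℕ} {β : L}
    (b : Module.Basis (Fin n) K L) (hb : ∀ i : Fin n, b i = β ^ Fintype.card K ^ (i : ℕ)) :
    IsCoprime (X ^ n - 1) (conjPoly (Fintype.card K) n β) := by
  have hrank : Module.finrank K L = n := by simpa using Module.finrank_eq_card_basis b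
  have hn : 0 < n := hrank ▸ Module.finrank_pos
  have hfix : ∀ x : L, x ^ Fintype.card K ^ n = x := hrank ▸ FiniteField.pow_card_pow_finrank_s12
  let ι := IsScalarTower.toAlgHom K L (AlgebraicClosure L)
  refine (isCoprime_iff_aeval_ne_zero_of_isAlgClosed L (AlgebraicClosure L) _ _).mpr fun θ => ?_
  by_contra! ⟨hθn, hθβ⟩
  simp only [map_sub, map_pow, aeval_X, map_one, sub_eq_zero] at hθn
  have hθ : θ ≠ 0 := by rintro rfl; simp [hn.ne'] at hθn
  let Λ : L →ₗ[K] AlgebraicClosure L := ∑ i : Fin n,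
    θ ^ (n - 1 - i) • (ι.comp (FiniteField.frobeniusAlgHom K L ^ (i : ℕ))).toLinearMap
  have hΛ (x : L) : Λ x = aeval θ (conjPoly (Fintype.card K) n x) := by
    rw [aeval_conjPoly, ← Fin.sum_univ_eq_sum_range (fun i => θ ^ (n - 1 - i) *
      ι ((FiniteField.frobeniusAlgHom K L ^ i) x))]
    simp [Λ]
  have hΛ0 : Λ = 0 := b.ext fun i => by
    obtain ⟨c, hc⟩ := X_pow_sub_one_dvd_conjPoly_pow_pow hn hfix β i
    rw [hΛ, hb, LinearMap.zero_apply, ← sub_eq_zero]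
    simpa [hθn, hθβ] using congrArg (aeval θ) hc
  have hinj : Function.Injective fun i : Fin n =>
      ι.comp (FiniteField.frobeniusAlgHom K L ^ (i : ℕ)) := fun i j hij =>
    Fin.cast_injective hrank.symm <| (FiniteField.bijective_frobeniusAlgHom_pow K L).1 <|
      (AlgHom.cancel_left ι.injective).mp hij
  have hli := (linearIndependent_toLinearMap K L (AlgebraicClosure L)).comp _ hinj
  exact pow_ne_zero _ hθ <|
    Fintype.linearIndependent_iff.mp hli (fun i : Fin n => θ ^ (n - 1 - i)) hΛ0 ⟨0, hn⟩

end Normal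

theorem EuclideanDomain.associated_gcd_of_dvd_sub_mul_s12 {R : Type*} [EuclideanDomain R]
    [DecidableEq R] {a g f h : R} (hfa : f ∣ a) (hg : a ∣ g - f * h) (hh : IsCoprime a h) :
    Associated (EuclideanDomain.gcd a g) f := by
  have hfg : f ∣ g := by simpa using dvd_add (hfa.trans hg) (dvd_mul_right f h)
  have hdfh : EuclideanDomain.gcd a g ∣ f * h := by
    simpa using dvd_sub (EuclideanDomain.gcd_dvd_right a g)
      ((EuclideanDomain.gcd_dvd_left a g).trans hg)
  exact associated_of_dvd_dvd
    ((hh.of_isCoprime_of_dvd_left (EuclideanDomain.gcd_dvd_left a g)).dvd_of_dvd_mul_right hdfh)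
    (EuclideanDomain.dvd_gcd hfa hfg)

theorem stmt12_general (q n r k : ℕ)
    (K : Type*) [Field K] [Fintype K] (hK : Fintype.card K = q)
    (L : Type*) [Field L] [Fintype L] [Algebra K L]
    (hr : r ∣ q ^ n - 1)
    (f : Polynomial K) (hdvd : f ∣ Polynomial.X ^ n - 1)
    (hdeg : f.natDegree = k)
    (α : Lˣ) (hα : ∀ x : Lˣ, x ∈ Subgroup.zpowers α)
    (β : L) (b : Module.Basis (Fin n) K L) (hb : ∀ i : Fin n, b i = β ^ q ^ (i : ℕ))
    (hrel : (α : L) ^ r = polyAct q f β) :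
    orderOf (α ^ r) = (q ^ n - 1) / r ∧
      (EuclideanDomain.gcd (Polynomial.X ^ n - 1 : Polynomial L)
        (∑ i ∈ Finset.range n,
          Polynomial.C (((α : L) ^ r) ^ q ^ i) * Polynomial.X ^ (n - 1 - i))).natDegree
        = k := by
  have hrank : Module.finrank K L = n := by simpa using Module.finrank_eq_card_basis b
  subst hK hrank
  constructor
  · rw [orderOf_pow, orderOf_eq_card_of_forall_mem_zpowers hα, Nat.card_eq_fintype_card,
      Fintype.card_units, Module.card_eq_pow_finrank (K := K), Nat.gcd_eq_right hr]
  · have hcong := X_pow_sub_one_dvd_conjPoly_polyAct Module.finrank_pos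
      FiniteField.pow_card_pow_finrank_s12 f β
    rw [← hrel] at hcong
    have hassoc := EuclideanDomain.associated_gcd_of_dvd_sub_mul_s12
      (by simpa using Polynomial.map_dvd (algebraMap K L) hdvd) hcong
      (isCoprime_X_pow_sub_one_conjPoly b hb)
    rw [← hdeg, ← natDegree_map (algebraMap K L)]
    exact natDegree_eq_of_degree_eq (degree_eq_degree_of_associated hassoc)

theorem stmt12 (q n r k : ℕ) (hq : 1 < q) (hn : 0 < n)
    (K : Type*) [Field K] [Fintype K] (hK : Fintype.card K = q)
    (L : Type*) [Field L] [Fintype L] [Algebra K L]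
    (hrank : Module.finrank K L = n)
    (hr : r ∣ q ^ n - 1) (hr0 : 0 < r)
    (f : Polynomial K) (hmonic : f.Monic) (hdvd : f ∣ Polynomial.X ^ n - 1)
    (hdeg : f.natDegree = k)
    (α : Lˣ) (hα : ∀ x : Lˣ, x ∈ Subgroup.zpowers α)
    (β : L) (b : Module.Basis (Fin n) K L) (hb : ∀ i : Fin n, b i = β ^ q ^ (i : ℕ))
    (hrel : (α : L) ^ r = polyAct q f β) :
    orderOf (α ^ r) = (q ^ n - 1) / r ∧
      (EuclideanDomain.gcd (Polynomial.X ^ n - 1 : Polynomial L)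
        (∑ i ∈ Finset.range n,
          Polynomial.C (((α : L) ^ r) ^ q ^ i) * Polynomial.X ^ (n - 1 - i))).natDegree
        = k :=
  stmt12_general q n r k K hK L hr f hdvd hdeg α hα β b hb hrel
end

section
/- (Sieving inequality) Let r | q^n - 1 and f ∈ F_q[x] a monic divisor of x^n - 1 of degree k. Let ℓ | q^n - 1 and let p_1, ..., p_v be all primes dividing q^n - 1 but not ℓ; let g | x^n - 1 be monic and P_1, ..., P_s be all monic irreducible polynomials dividing x^n - 1 but not g. Writing N_{r,f}(m, h) for the number of pairs (α, β) ∈ F_{q^n}^* × F_{q^n} with α m-free, β h-free, and α^r = f ∘ β, we have N_{r,f}(q^n - 1, x^n - 1) ≥ Σ_{i=1}^{v} N_{r,f}(p_i ℓ, g) + Σ_{i=1}^{s} N_{r,f}(ℓ, P_i g) − (v + s − 1) N_{r,f}(ℓ, g). -/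
/-- `α` is `m`-free: not a `d`-th power for any divisor `d ≠ 1` of `m`. -/
def mFree {F : Type*} [Field F] (m : ℕ) (α : Fˣ) : Prop :=
  ∀ d : ℕ, d ∣ m → d ≠ 1 → ¬ ∃ β : F, (α : F) = β ^ d

/-- `β` is `g`-free: not of the form `u ∘ γ` for any monic divisor `u ≠ 1` of `g`. -/
def polyFree (q : ℕ) {K L : Type*} [Field K] [Field L] [Algebra K L]
    (g : Polynomial K) (β : L) : Prop :=
  ∀ u : Polynomial K, u.Monic → u ∣ g → u ≠ 1 → ¬ ∃ γ : L, β = polyAct q u γ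

/-- `N_{r,f}(m, g)`: the number of pairs `(α, β)` with `α` `m`-free, `β` `g`-free
and `α^r = f ∘ β`. -/
noncomputable def Ncount (q r : ℕ) {K L : Type*} [Field K] [Field L] [Algebra K L]
    (f : Polynomial K) (m : ℕ) (g : Polynomial K) : ℕ :=
  Nat.card {p : Lˣ × L // mFree m p.1 ∧ polyFree q g p.2 ∧ (p.1 : L) ^ r = polyAct q f p.2}

lemma mFree_of_dvd {F : Type*} [Field F] {m m' : ℕ} (h : m' ∣ m) {α : Fˣ}
    (hα : mFree m α) : mFree m' α :=
  fun d hd => hα d (hd.trans h)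

lemma polyFree_of_dvd (q : ℕ) {K L : Type*} [Field K] [Field L] [Algebra K L]
    {g g' : Polynomial K} (h : g' ∣ g) {β : L} (hβ : polyFree q g β) : polyFree q g' β :=
  fun u hu hud => hβ u hu (hud.trans h)

theorem stmt17 (q n r k v s : ℕ) (hq : 1 < q) (hn : 0 < n)
    (K : Type*) [Field K] [Fintype K] (hK : Fintype.card K = q)
    (L : Type*) [Field L] [Fintype L] [Algebra K L]
    (hrank : Module.finrank K L = n)
    (hr : r ∣ q ^ n - 1)
    (f : Polynomial K) (hmonic : f.Monic) (hdvd : f ∣ Polynomial.X ^ n - 1)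
    (hdeg : f.natDegree = k)
    (ℓ : ℕ) (hℓ : ℓ ∣ q ^ n - 1)
    (pr : Fin v → ℕ) (hp : ∀ i, (pr i).Prime) (hpd : ∀ i, pr i ∣ q ^ n - 1)
    (hpnd : ∀ i, ¬ pr i ∣ ℓ) (hpinj : Function.Injective pr)
    (hpall : ∀ p' : ℕ, p'.Prime → p' ∣ q ^ n - 1 → ¬ p' ∣ ℓ → ∃ i, pr i = p')
    (g : Polynomial K) (hg : g.Monic) (hgd : g ∣ Polynomial.X ^ n - 1)
    (P : Fin s → Polynomial K) (hPm : ∀ i, (P i).Monic) (hPi : ∀ i, Irreducible (P i))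
    (hPd : ∀ i, P i ∣ Polynomial.X ^ n - 1) (hPnd : ∀ i, ¬ P i ∣ g)
    (hPinj : Function.Injective P)
    (hPall : ∀ P' : Polynomial K, P'.Monic → Irreducible P' →
      P' ∣ Polynomial.X ^ n - 1 → ¬ P' ∣ g → ∃ i, P i = P') :
    ((Ncount q r (L := L) f (q ^ n - 1) (Polynomial.X ^ n - 1) : ℤ)) ≥
      (∑ i : Fin v, (Ncount q r (L := L) f (pr i * ℓ) g : ℤ)) +
      (∑ i : Fin s, (Ncount q r (L := L) f ℓ (P i * g) : ℤ)) -
      ((v : ℤ) + s - 1) * Ncount q r (L := L) f ℓ g := by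
  classical
  -- Frobenius as a K-linear endomorphism of L
  set p := ringChar K with hpdef
  haveI hchK : CharP K p := ringChar.charP K
  haveI hchL : CharP L p := charP_of_injective_algebraMap (algebraMap K L).injective p
  obtain ⟨m, hpprime, hcard⟩ := FiniteField.card K p
  haveI : ExpChar L p := ExpChar.prime hpprime
  have hqpm : q = p ^ (m : ℕ) := by rw [← hK, hcard]
  have hfix : ∀ c : K, c ^ q = c := by
    intro c; rw [← hK]; exact FiniteField.pow_card c
  let ψ : L →ₗ[K] L :=
    { toFun := fun x => x ^ q
      map_add' := fun x y => by
        simp only [hqpm]; exact add_pow_expChar_pow x y p m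
      map_smul' := fun c x => by
        simp only [Algebra.smul_def, mul_pow, RingHom.id_apply, ← map_pow, hfix] }
  have hψpow : ∀ (i : ℕ) (x : L), (ψ ^ i) x = x ^ q ^ i := by
    intro i
    induction i with
    | zero => intro x; simp
    | succ i ih =>
      intro x
      rw [pow_succ, Module.End.mul_apply]
      have : ψ x = x ^ q := rfl
      rw [this, ih, ← pow_mul, pow_succ, mul_comm]
  have hact : ∀ (u : Polynomial K) (β : L), polyAct q u β = (Polynomial.aeval ψ u) β := by
    intro u β
    rw [Polynomial.aeval_eq_sum_range, polyAct]
    rw [LinearMap.coe_sum, Finset.sum_apply]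
    refine Finset.sum_congr rfl fun i _ => ?_
    rw [LinearMap.smul_apply, hψpow]
  have hmul : ∀ (u w : Polynomial K) (γ : L),
      polyAct q (u * w) γ = polyAct q u (polyAct q w γ) := by
    intro u w γ
    rw [hact, hact, hact, map_mul, Module.End.mul_apply]
  -- characterization of full multiplicative freeness
  have hmchar : ∀ α : Lˣ,
      mFree (q ^ n - 1) α ↔ mFree ℓ α ∧ ∀ i, mFree (pr i * ℓ) α := by
    intro α
    constructor
    · intro h
      refine ⟨mFree_of_dvd hℓ h, fun i => mFree_of_dvd ?_ h⟩
      exact Nat.Coprime.mul_dvd_of_dvd_of_dvd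
        (((hp i).coprime_iff_not_dvd).mpr (hpnd i)) (hpd i) hℓ
    · rintro ⟨h1, h2⟩ d hd hd1 ⟨β, hβ⟩
      obtain ⟨pp, hpp, hppd⟩ := Nat.exists_prime_and_dvd hd1
      have hpow : (α : L) = (β ^ (d / pp)) ^ pp := by
        rw [hβ, ← pow_mul, Nat.div_mul_cancel hppd]
      by_cases hppl : pp ∣ ℓ
      · exact h1 pp hppl hpp.ne_one ⟨β ^ (d / pp), hpow⟩
      · obtain ⟨i, hi⟩ := hpall pp hpp (hppd.trans hd) hppl
        exact h2 i pp (hi ▸ Dvd.intro ℓ rfl) hpp.ne_one ⟨β ^ (d / pp), hpow⟩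
  -- characterization of full additive freeness
  have hpchar : ∀ β : L,
      polyFree q ((Polynomial.X : Polynomial K) ^ n - 1) β ↔
        polyFree q g β ∧ ∀ i, polyFree q (P i * g) β := by
    intro β
    constructor
    · intro h
      refine ⟨polyFree_of_dvd q hgd h, fun i => polyFree_of_dvd q ?_ h⟩
      exact (((hPi i).coprime_iff_not_dvd).mpr (hPnd i)).mul_dvd (hPd i) hgd
    · rintro ⟨h1, h2⟩ u hu hud hu1 ⟨γ, hγ⟩
      have hnu : ¬ IsUnit u := fun h => hu1 (hu.eq_one_of_isUnit h)
      obtain ⟨Q, hQirr, hQdvd⟩ := WfDvdMonoid.exists_irreducible_factor hnu hu.ne_zero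
      set Q' := normalize Q with hQ'def
      have hQ'monic : Q'.Monic := Polynomial.monic_normalize hQirr.ne_zero
      have hQ'irr : Irreducible Q' := (associated_normalize Q).irreducible hQirr
      have hQ'dvd : Q' ∣ u := (normalize_dvd_iff).mpr hQdvd
      have hQ'ne1 : Q' ≠ 1 := hQ'irr.ne_one
      obtain ⟨w, hw⟩ := hQ'dvd
      have hβQ : β = polyAct q Q' (polyAct q w γ) := by
        rw [hγ, hw, hmul]
      have hQ'X : Q' ∣ Polynomial.X ^ n - 1 := (show Q' ∣ u from ⟨w, hw⟩).trans hud
      by_cases hQg : Q' ∣ g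
      · exact h1 Q' hQ'monic hQg hQ'ne1 ⟨polyAct q w γ, hβQ⟩
      · obtain ⟨i, hi⟩ := hPall Q' hQ'monic hQ'irr hQ'X hQg
        exact h2 i Q' hQ'monic (hi ▸ Dvd.intro g rfl) hQ'ne1 ⟨polyAct q w γ, hβQ⟩
  -- counting: identify Ncount with a filtered Finset card
  have hcard : ∀ (m' : ℕ) (h' : Polynomial K),
      Ncount q r (L := L) f m' h' =
        (Finset.univ.filter (fun x : Lˣ × L =>
          mFree m' x.1 ∧ polyFree q h' x.2 ∧ (x.1 : L) ^ r = polyAct q f x.2)).card := by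
    intro m' h'
    rw [Ncount, Nat.card_eq_fintype_card]
    exact Fintype.card_of_subtype _ (fun x => by simp)
  -- the index type and the sets
  set J := (Fin v ⊕ Fin s)
  let C : J → ℕ × Polynomial K := Sum.elim (fun i => (pr i * ℓ, g)) (fun i => (ℓ, P i * g))
  let pred : ℕ → Polynomial K → (Lˣ × L) → Prop := fun m' h' x =>
    mFree m' x.1 ∧ polyFree q h' x.2 ∧ (x.1 : L) ^ r = polyAct q f x.2
  let S : J → Finset (Lˣ × L) := fun j => Finset.univ.filter (pred (C j).1 (C j).2)
  let T : Finset (Lˣ × L) := Finset.univ.filter (pred ℓ g)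
  let F : Finset (Lˣ × L) :=
    Finset.univ.filter (pred (q ^ n - 1) ((Polynomial.X : Polynomial K) ^ n - 1))
  have hiff : ∀ x : Lˣ × L,
      pred (q ^ n - 1) ((Polynomial.X : Polynomial K) ^ n - 1) x ↔
        pred ℓ g x ∧ ∀ j : J, pred (C j).1 (C j).2 x := by
    intro x
    constructor
    · rintro ⟨hm, hf, he⟩
      rw [hmchar] at hm
      rw [hpchar] at hf
      refine ⟨⟨hm.1, hf.1, he⟩, ?_⟩
      rintro (i | i)
      · exact ⟨hm.2 i, hf.1, he⟩
      · exact ⟨hm.1, hf.2 i, he⟩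
    · rintro ⟨⟨hm, hf, he⟩, hj⟩
      exact ⟨(hmchar _).mpr ⟨hm, fun i => (hj (Sum.inl i)).1⟩,
        (hpchar _).mpr ⟨hf, fun i => (hj (Sum.inr i)).2.1⟩, he⟩
  have hmemF : ∀ x, x ∈ F ↔ pred (q ^ n - 1) ((Polynomial.X : Polynomial K) ^ n - 1) x := by
    intro x; simp [F]
  have hmemT : ∀ x, x ∈ T ↔ pred ℓ g x := by intro x; simp [T]
  have hmemS : ∀ j x, x ∈ S j ↔ pred (C j).1 (C j).2 x := by intro j x; simp [S]
  have hFT : F ⊆ T := by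
    intro x hx
    rw [hmemT]
    exact ((hiff x).mp ((hmemF x).mp hx)).1
  have hST : ∀ j, S j ⊆ T := by
    intro j x hx
    rw [hmemS] at hx
    rw [hmemT]
    rcases j with i | i
    · exact ⟨mFree_of_dvd (Dvd.intro_left (pr i) rfl) hx.1, hx.2.1, hx.2.2⟩
    · exact ⟨hx.1, polyFree_of_dvd q (Dvd.intro_left (P i) rfl) hx.2.1, hx.2.2⟩
  have hsub : T \ F ⊆ Finset.univ.biUnion (fun j : J => T \ S j) := by
    intro x hx
    rw [Finset.mem_sdiff] at hx
    rw [Finset.mem_biUnion]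
    by_contra hcon
    push_neg at hcon
    have hall : ∀ j : J, pred (C j).1 (C j).2 x := by
      intro j
      have := hcon j (Finset.mem_univ j)
      rw [Finset.mem_sdiff] at this
      push_neg at this
      exact (hmemS j x).mp (this hx.1)
    exact hx.2 ((hmemF x).mpr ((hiff x).mpr ⟨(hmemT x).mp hx.1, hall⟩))
  have h1 : (T \ F).card ≤ ∑ j : J, (T \ S j).card :=
    le_trans (Finset.card_le_card hsub) (Finset.card_biUnion_le)
  have hcf : (T \ F).card = T.card - F.card := Finset.card_sdiff_of_subset hFT
  have hcs : ∀ j, (T \ S j).card = T.card - (S j).card :=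
    fun j => Finset.card_sdiff_of_subset (hST j)
  have hZ : (T.card : ℤ) - F.card ≤ ∑ j : J, ((T.card : ℤ) - (S j).card) := by
    have h2 : (((T \ F).card : ℤ)) ≤ ∑ j : J, (((T \ S j).card : ℤ)) := by
      exact_mod_cast h1
    calc (T.card : ℤ) - F.card
        = ((T \ F).card : ℤ) := by
          rw [hcf, Nat.cast_sub (Finset.card_le_card hFT)]
      _ ≤ ∑ j : J, (((T \ S j).card : ℤ)) := h2
      _ = ∑ j : J, ((T.card : ℤ) - (S j).card) := by
          refine Finset.sum_congr rfl fun j _ => ?_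
          rw [hcs j, Nat.cast_sub (Finset.card_le_card (hST j))]
  have hsumsplit : ∑ j : J, ((S j).card : ℤ) =
      (∑ i : Fin v, ((S (Sum.inl i)).card : ℤ)) +
      (∑ i : Fin s, ((S (Sum.inr i)).card : ℤ)) := Fintype.sum_sum_type _
  have hcardJ : (Fintype.card J : ℤ) = (v : ℤ) + s := by
    simp [J]
  rw [Finset.sum_sub_distrib, Finset.sum_const, Finset.card_univ, hsumsplit] at hZ
  -- rewrite the goal in terms of the Finset cards
  have e0 : (Ncount q r (L := L) f (q ^ n - 1) (Polynomial.X ^ n - 1) : ℤ) = F.card := by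
    rw [hcard]
  have e1 : ∀ i : Fin v, (Ncount q r (L := L) f (pr i * ℓ) g : ℤ) = (S (Sum.inl i)).card := by
    intro i; rw [hcard]; rfl
  have e2 : ∀ i : Fin s, (Ncount q r (L := L) f ℓ (P i * g) : ℤ) = (S (Sum.inr i)).card := by
    intro i; rw [hcard]; rfl
  have e3 : (Ncount q r (L := L) f ℓ g : ℤ) = T.card := by rw [hcard]
  rw [ge_iff_le, e0, e3]
  rw [Finset.sum_congr rfl fun i _ => e1 i, Finset.sum_congr rfl fun i _ => e2 i]
  have hns : (Fintype.card J • (T.card : ℤ)) = ((v : ℤ) + s) * T.card := by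
    rw [nsmul_eq_mul, hcardJ]
  rw [hns] at hZ
  linarith
end
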